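/- arXiv:2206.03339 — 4 statements merged into one kernel-verified Lean document; each statement's English description precedes it below -/
import Mathlib

section
/- For any tree T on t vertices (t ≥ 2), every simple graph on n vertices with more than (t-2)·n edges contains a subgraph isomorphic to T. -/
/-- `T` has a copy in `G`: an injective graph homomorphism image, i.e. a subgraph of `G`
isomorphic to `T`. -/
def ContainsCopy {α β : Type*} (T : SimpleGraph α) (G : SimpleGraph β) : Prop :=
  ∃ f : α → β, Function.Injective f ∧ ∀ a b, T.Adj a b → G.Adj (f a) (f b)

/-!
Since `∑ v, deg v = 2 |E|`, a graph with more than `k n` edges has `∑ v, deg v - 2 k n > 0`.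
Deleting a vertex of degree at most `k` does not decrease this quantity, so deleting such vertices
for as long as possible ends in a nonempty induced subgraph of minimum degree at least `k + 1`.
A graph of minimum degree at least `t - 1` contains every tree `T` on `t` vertices: embed `T`
minus a leaf `l`; the image of the neighbour of `l` has at least `t - 1` neighbours, at most
`t - 2` of which are used, so `l` can be sent to a free one.
-/

open Finset

namespace SimpleGraph

section MinDegreeSubgraph

variable {V : Type*} (G : SimpleGraph V) [DecidableRel G.Adj]

lemma degree_induce_coe_finset (s : Finset V) (v : (s : Set V)) :
    (G.induce (s : Set V)).degree v = #{w ∈ s | G.Adj v w} := by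
  rw [← card_neighborFinset_eq_degree, ← card_map (.subtype (· ∈ (s : Set V)))]
  congr 1
  ext
  simp [and_comm]

variable [DecidableEq V]

lemma sum_card_filter_adj_erase_add {s : Finset V} {v : V} (hv : v ∈ s) :
    ∑ u ∈ s.erase v, #{w ∈ s.erase v | G.Adj u w} + 2 * #{w ∈ s | G.Adj v w} =
      ∑ u ∈ s, #{w ∈ s | G.Adj u w} := by
  have hrow : ∀ u, #{w ∈ s | G.Adj u w} =
      #{w ∈ s.erase v | G.Adj u w} + if G.Adj u v then 1 else 0 := fun u ↦ by
    simp only [card_filter, ← sum_erase_add _ _ hv]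
  have hcol : ∑ u ∈ s.erase v, (if G.Adj u v then 1 else 0) = #{w ∈ s | G.Adj v w} := by
    rw [card_filter, ← sum_erase_add _ _ hv]
    simp [G.adj_comm]
  rw [← sum_erase_add _ _ hv, two_mul, ← add_assoc, ← hcol, ← sum_add_distrib]
  simp only [← hrow]

lemma exists_nonempty_forall_lt_card_filter_adj (k : ℕ) {s : Finset V}
    (h : 2 * k * #s < ∑ u ∈ s, #{w ∈ s | G.Adj u w}) :
    ∃ t : Finset V, t.Nonempty ∧ ∀ v ∈ t, k < #{w ∈ t | G.Adj v w} := by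
  induction s using Finset.strongInduction with
  | H s ih =>
    by_cases hs : ∀ v ∈ s, k < #{w ∈ s | G.Adj v w}
    · rcases s.eq_empty_or_nonempty with rfl | hne
      · simp at h
      · exact ⟨s, hne, hs⟩
    obtain ⟨v, hv, hle⟩ := not_forall₂.mp hs
    refine ih (s.erase v) (erase_ssubset hv) ?_
    have hsum := G.sum_card_filter_adj_erase_add hv
    rw [← card_erase_add_one hv] at h
    linarith

theorem exists_nonempty_forall_lt_degree_induce [Fintype V] {k : ℕ}
    (h : k * Fintype.card V < #G.edgeFinset) :
    ∃ s : Finset V, s.Nonempty ∧ ∀ v : (s : Set V), k < (G.induce (s : Set V)).degree v := by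
  have hsum : 2 * k * #(univ : Finset V) < ∑ u, #{w | G.Adj u w} := by
    simp only [← neighborFinset_eq_filter, card_neighborFinset_eq_degree,
      sum_degrees_eq_twice_card_edges, card_univ]
    linarith
  obtain ⟨s, hs, hdeg⟩ := G.exists_nonempty_forall_lt_card_filter_adj k hsum
  exact ⟨s, hs, fun v ↦ G.degree_induce_coe_finset s v ▸ hdeg v v.2⟩

end MinDegreeSubgraph

section Trees

variable {α W : Type*} {T : SimpleGraph α} {H : SimpleGraph W}

lemma isContained_of_isContained_induce_compl_leaf {l p : α} (hlp : T.Adj l p)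
    (hl : ∀ a, T.Adj l a → a = p) (f : Copy (T.induce {l}ᶜ) H) {w : W}
    (hw : H.Adj (f ⟨p, hlp.ne'⟩) w) (hwf : w ∉ Set.range f) : T ⊑ H := by
  classical
  let g : α → W := fun a ↦ if h : a = l then w else f ⟨a, h⟩
  have hg : ∀ {a b}, T.Adj a b → H.Adj (g a) (g b) := by
    intro a b hab
    by_cases ha : a = l <;> by_cases hb : b = l
    · exact (hab.ne (ha.trans hb.symm)).elim
    · subst ha
      obtain rfl := hl b hab
      simpa [g, hb] using hw.symm
    · subst hb
      obtain rfl := hl a hab.symm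
      simpa [g, ha] using hw
    · simpa [g, ha, hb] using
        f.toHom.map_adj (show (T.induce {l}ᶜ).Adj ⟨a, ha⟩ ⟨b, hb⟩ from hab)
  exact ⟨⟨⟨g, hg⟩, Function.Injective.dite (· = l) (f := fun _ ↦ w)
    (fun x y _ ↦ Subtype.ext (x.2.trans y.2.symm)) f.injective fun h ↦ hwf ⟨_, h.symm⟩⟩⟩

theorem IsTree.isContained_of_card_sub_one_le_degree [Fintype α] (hT : T.IsTree)
    [H.LocallyFinite] [Nonempty W] (hH : ∀ w, Fintype.card α - 1 ≤ H.degree w) : T ⊑ H := by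
  induction h : Fintype.card α generalizing α with
  | zero =>
    have := hT.connected.nonempty
    exact (Fintype.card_ne_zero h).elim
  | succ n ih =>
    rcases subsingleton_or_nontrivial α with hα | hα
    · obtain ⟨w⟩ := ‹Nonempty W›
      exact ⟨⟨⟨fun _ ↦ w, fun hab ↦ (hab.ne (Subsingleton.elim _ _)).elim⟩,
        Function.injective_of_subsingleton _⟩⟩
    classical
    obtain ⟨l, hl⟩ := hT.exists_vert_degree_one_of_nontrivial
    obtain ⟨p, hlp, hp⟩ := degree_eq_one_iff_existsUnique_adj.mp hl
    have hcard : Fintype.card ({l}ᶜ : Set α) = n := by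
      rw [Fintype.card_compl_set, Set.card_singleton, h, Nat.add_sub_cancel]
    obtain ⟨f⟩ := ih ⟨hT.connected.induce_compl_singleton_of_degree_eq_one hl,
      hT.isAcyclic.induce _⟩ (fun w ↦ by have := hH w; omega) hcard
    set q : ({l}ᶜ : Set α) := ⟨p, hlp.ne'⟩
    have hlt : #((univ.image f).erase (f q)) < #(H.neighborFinset (f q)) := by
      rw [card_erase_of_mem (mem_image_of_mem _ (mem_univ q)),
        card_image_of_injective (f := f) _ f.injective, card_univ, hcard,
        card_neighborFinset_eq_degree]
      have := hH (f q)
      have := Fintype.one_lt_card (α := α)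
      omega
    obtain ⟨w, hw, hwf⟩ := exists_mem_notMem_of_card_lt_card hlt
    rw [mem_neighborFinset] at hw
    refine isContained_of_isContained_induce_compl_leaf hlp hp f hw ?_
    rintro ⟨a, rfl⟩
    exact hwf (mem_erase.2 ⟨hw.ne', mem_image_of_mem _ (mem_univ a)⟩)

end Trees

end SimpleGraph

theorem stmt1_general (t n : ℕ) (T : SimpleGraph (Fin t)) (hT : T.IsTree)
    (G : SimpleGraph (Fin n)) [DecidableRel G.Adj]
    (hG : (t - 2) * n < G.edgeFinset.card) :
    ContainsCopy T G := by
  obtain ⟨s, hs, hdeg⟩ := G.exists_nonempty_forall_lt_degree_induce (k := t - 2) (by simpa using hG)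
  have : Nonempty (s : Set (Fin n)) := hs.coe_sort
  obtain ⟨f⟩ := hT.isContained_of_card_sub_one_le_degree (H := G.induce (s : Set (Fin n)))
    fun v ↦ by have := hdeg v; simp only [Fintype.card_fin]; omega
  let g := (SimpleGraph.Copy.induce G (s : Set (Fin n))).comp f
  exact ⟨g, g.injective, fun _ _ hab ↦ g.toHom.map_adj hab⟩

/-- For any tree `T` on `t` vertices (`t ≥ 2`), every simple graph on `n`
vertices with more than `(t-2)·n` edges contains a subgraph isomorphic to `T`. -/
theorem stmt1 (t n : ℕ) (ht : 2 ≤ t) (T : SimpleGraph (Fin t)) (hT : T.IsTree)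
    (G : SimpleGraph (Fin n)) [DecidableRel G.Adj]
    (hG : (t - 2) * n < G.edgeFinset.card) :
    ContainsCopy T G :=
  stmt1_general t n T hT G hG
end

section
/- The graph K_k ∨ ((2k-1)K_1 ∪ K_2) (complete bipartite K_{k,2k+1} with one extra edge added inside the part of size 2k+1) contains every tree on 2k+2 vertices as a subgraph, for k ≥ 1. -/
/-- `K_k ∨ ((2k-1)K_1 ∪ K_2)` on `3k+1` vertices: the first `k` vertices form a clique
joined to everything, and among the remaining `2k+1` vertices there is exactly one edge,
between vertices `k` and `k+1`. -/
def KkJoinOneEdge (k : ℕ) : SimpleGraph (Fin (3 * k + 1)) where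
  Adj v w := v ≠ w ∧ (v.val < k ∨ w.val < k ∨
      (v.val = k ∧ w.val = k + 1) ∨ (v.val = k + 1 ∧ w.val = k))
  symm := ⟨by intro v w h; refine ⟨h.1.symm, ?_⟩; tauto⟩
  loopless := ⟨fun _ h => h.1 rfl⟩

/-!
A tree is bipartite. Let `v` be a leaf, `u` its neighbour and `D` the colour class of `v`.
If `|D| ≤ k + 1`, every edge other than `uv` meets `D \ {v}`, a set of at most `k` vertices:
send it into the clique `K_k`, send `u, v` onto the extra edge and everything else anywhere.
Otherwise the other colour class has at most `k` vertices and already meets every edge.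
-/

open SimpleGraph Finset

theorem Function.exists_injective_eqOn_of_card_le {α β : Type*} [Fintype α] [Fintype β]
    (h : Fintype.card α ≤ Fintype.card β) {s : Set α} {f : α → β} (hf : s.InjOn f) :
    ∃ g : α → β, Function.Injective g ∧ s.EqOn g f := by
  classical
  have hs : #(s.toFinset.image f) ≤ Fintype.card α := card_image_le.trans (card_le_univ _)
  obtain ⟨t, hst, ht⟩ := exists_superset_card_eq hs h
  obtain ⟨e, he⟩ := Set.MapsTo.exists_equiv_extend_of_card_eq ht.symm
    (fun a ha => hst (mem_image_of_mem f (Set.mem_toFinset.2 ha))) hf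
  exact ⟨fun a => e a, Subtype.val_injective.comp e.injective, he⟩

theorem exists_injective_fin_of_card_le {α : Type*} [Fintype α] {n k : ℕ}
    (hα : Fintype.card α ≤ n) (hkn : k + 2 ≤ n) {S : Finset α} (hS : #S ≤ k) {u v : α}
    (huv : u ≠ v) (hu : u ∉ S) (hv : v ∉ S) :
    ∃ g : α → Fin n, Function.Injective g ∧ (g u : ℕ) = k ∧ (g v : ℕ) = k + 1 ∧
      ∀ x ∈ S, (g x : ℕ) < k := by
  classical
  let t : Finset (Fin n) := {i | (i : ℕ) < k}
  have : NeZero n := ⟨by omega⟩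
  obtain ⟨f, hfS, hf⟩ := S.finite_toSet.exists_injOn_of_encard_le (t := (t : Set (Fin n))) (by
    rw [Set.encard_coe_eq_coe_finsetCard, Set.encard_coe_eq_coe_finsetCard, Fin.card_filter_val_lt]
    norm_cast; omega)
  let f₀ : α → Fin n := fun x =>
    if x = u then ⟨k, by omega⟩ else if x = v then ⟨k + 1, by omega⟩ else f x
  have hf₀u : (f₀ u : ℕ) = k := by simp [f₀]
  have hf₀v : (f₀ v : ℕ) = k + 1 := by simp [f₀, huv.symm]
  have hf₀S : Set.EqOn f₀ f S := fun x hx => by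
    simp [f₀, ne_of_mem_of_not_mem hx hu, ne_of_mem_of_not_mem hx hv]
  have hf₀lt : ∀ x ∈ S, (f₀ x : ℕ) < k := fun x hx => by
    simpa [hf₀S hx, t] using hfS hx
  have hf₀ : (insert u (insert v (S : Set α))).InjOn f₀ := by
    rw [Set.injOn_insert (by simp [huv, hu]), Set.injOn_insert (by simpa using hv)]
    refine ⟨⟨hf.congr hf₀S.symm, ?_⟩, ?_⟩
    · rintro ⟨x, hx, hxv⟩
      have := hf₀lt x hx
      omega
    · rintro ⟨x, rfl | hx, hxu⟩
      · omega
      · have := hf₀lt x hx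
        omega
  obtain ⟨g, hg, hgf₀⟩ := Function.exists_injective_eqOn_of_card_le (by simpa using hα) hf₀
  refine ⟨g, hg, ?_, ?_, fun x hx => ?_⟩
  · rw [hgf₀ (by simp)]; exact hf₀u
  · rw [hgf₀ (by simp)]; exact hf₀v
  · rw [hgf₀ (by simp [hx])]; exact hf₀lt x hx

theorem containsCopy_kkJoinOneEdge_of_cover {α : Type*} [Fintype α] {k : ℕ} {T : SimpleGraph α}
    (hα : Fintype.card α ≤ 3 * k + 1) {S : Finset α} (hS : #S ≤ k) {u v : α} (huv : u ≠ v)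
    (hu : u ∉ S) (hv : v ∉ S)
    (hcover : ∀ a b, T.Adj a b → a ∈ S ∨ b ∈ S ∨ s(a, b) = s(u, v)) :
    ContainsCopy T (KkJoinOneEdge k) := by
  have hk : 1 ≤ k := by
    have := Fintype.one_lt_card_iff.2 ⟨u, v, huv⟩
    omega
  obtain ⟨g, hg, hgu, hgv, hgS⟩ := exists_injective_fin_of_card_le hα (by omega) hS huv hu hv
  refine ⟨g, hg, fun a b hab => ⟨hg.ne hab.ne, ?_⟩⟩
  rcases hcover a b hab with ha | hb | hab'
  · exact Or.inl (hgS a ha)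
  · exact Or.inr (Or.inl (hgS b hb))
  · rcases Sym2.eq_iff.1 hab' with ⟨rfl, rfl⟩ | ⟨rfl, rfl⟩
    · exact Or.inr (Or.inr (Or.inl ⟨hgu, hgv⟩))
    · exact Or.inr (Or.inr (Or.inr ⟨hgv, hgu⟩))

theorem SimpleGraph.Coloring.eq_or_eq_of_adj_of_fin_two {V : Type*} {G : SimpleGraph V}
    (c : G.Coloring (Fin 2)) {a b : V} (h : G.Adj a b) (i : Fin 2) : c a = i ∨ c b = i := by
  have := c.valid h
  omega

theorem SimpleGraph.Coloring.adj_hits_leaf_class_or_eq_leaf_edge {V : Type*} {G : SimpleGraph V}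
    (c : G.Coloring (Fin 2)) {u v : V} (hleaf : ∀ w, G.Adj v w → w = u) {a b : V}
    (hab : G.Adj a b) :
    (a ≠ v ∧ c a = c v) ∨ (b ≠ v ∧ c b = c v) ∨ s(a, b) = s(u, v) := by
  rcases c.eq_or_eq_of_adj_of_fin_two hab (c v) with ha | hb
  · by_cases hav : a = v
    · subst hav
      simp [hleaf b hab, Sym2.eq_swap]
    · exact Or.inl ⟨hav, ha⟩
  · by_cases hbv : b = v
    · subst hbv
      simp [hleaf a hab.symm]
    · exact Or.inr (Or.inl ⟨hbv, hb⟩)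

/-- `K_k ∨ ((2k-1)K_1 ∪ K_2)` contains every tree on `2k+2` vertices, k ≥ 1. -/
theorem stmt9 (k : ℕ) (hk : 1 ≤ k) (T : SimpleGraph (Fin (2 * k + 2))) (hT : T.IsTree) :
    ContainsCopy T (KkJoinOneEdge k) := by
  classical
  have hcard : Fintype.card (Fin (2 * k + 2)) ≤ 3 * k + 1 := by simp; omega
  obtain ⟨v, hv⟩ := hT.exists_vert_degree_one_of_nontrivial
  obtain ⟨u, hvu, hu⟩ := degree_eq_one_iff_existsUnique_adj.1 hv
  let c := hT.coloringTwo
  let D : Finset (Fin (2 * k + 2)) := {x | c x = c v}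
  have hvD : v ∈ D := by simp [D]
  by_cases hD : #D ≤ k + 1
  · refine containsCopy_kkJoinOneEdge_of_cover hcard (S := D.erase v)
      (by rw [card_erase_of_mem hvD]; omega) hvu.ne.symm (by simp [D, (c.valid hvu).symm])
      (by simp) ?_
    intro a b hab
    simpa [D] using c.adj_hits_leaf_class_or_eq_leaf_edge hu hab
  · obtain ⟨w, hwD, hwv⟩ := exists_mem_ne (by omega : 1 < #D) v
    refine containsCopy_kkJoinOneEdge_of_cover hcard (S := Dᶜ) (u := w) (v := v)
      (by rw [card_compl]; simp; omega) hwv (by simpa using hwD) (by simpa using hvD) ?_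
    intro a b hab
    by_contra! h
    simp only [D, mem_compl, mem_filter, mem_univ, true_and, not_not] at h
    exact c.valid hab (h.1.trans h.2.1.symm)
end

section
/- The graph K_k ∨ ((2k-1)K_1 ∪ P_3), obtained from K_{k,2k+2} by adding a path on 3 vertices inside the part of size 2k+2, contains every tree on 2k+3 vertices as a subgraph, for k ≥ 1. -/
/-- `K_k ∨ ((2k-1)K_1 ∪ P_3)` on `3k+2` vertices: the first `k` vertices form a clique
joined to everything, and among the remaining `2k+2` vertices the only edges are those of
the path `k — (k+1) — (k+2)`. -/
def KkJoinPathThree (k : ℕ) : SimpleGraph (Fin (3 * k + 2)) where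
  Adj v w := v ≠ w ∧ (v.val < k ∨ w.val < k ∨
      (v.val = k ∧ w.val = k + 1) ∨ (v.val = k + 1 ∧ w.val = k) ∨
      (v.val = k + 1 ∧ w.val = k + 2) ∨ (v.val = k + 2 ∧ w.val = k + 1))
  symm := ⟨by intro v w h; refine ⟨h.1.symm, ?_⟩; tauto⟩
  loopless := ⟨fun _ h => h.1 rfl⟩

/-!
A tree on `2k + 3` vertices is bipartite; let `A` be its smaller side, so `|A| ≤ k + 1` and every
edge meets `A`. If `|A| ≤ k`, put `A` on the clique and the other side on the remaining `2k + 2`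
vertices. If `|A| = k + 1`, the degrees in `A` add up to the `2k + 2` edges, so some `v ∈ A` has
degree at most `2`: put `v` at the centre of the path, its neighbours at the ends, `A \ {v}` on the
clique and the remaining vertices on the isolated vertices.
-/

open Finset

theorem Function.exists_injective_forall_eq_of_card_fiber_le {α β ι : Type*} [Fintype α]
    [Fintype β] [DecidableEq ι] (π : α → ι) (σ : β → ι)
    (h : ∀ i, #{a | π a = i} ≤ #{b | σ b = i}) :
    ∃ f : α → β, Function.Injective f ∧ ∀ a, σ (f a) = π a := by
  have e (i : ι) : {a // π a = i} ↪ {b // σ b = i} :=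
    (Function.Embedding.nonempty_of_card_le (by simpa [Fintype.card_subtype] using h i)).some
  refine ⟨fun a => e (π a) ⟨a, rfl⟩, ?_, fun a => (e (π a) ⟨a, rfl⟩).2⟩
  have hval : ∀ i j (x : {a // π a = i}) (y : {a // π a = j}), i = j →
      (e i x : β) = e j y → (x : α) = y := by
    rintro i _ x y rfl hxy
    exact congrArg Subtype.val ((e i).injective (Subtype.ext hxy))
  intro a a' haa'
  refine hval _ _ ⟨a, rfl⟩ ⟨a', rfl⟩ ?_ haa'
  rw [← (e (π a) ⟨a, rfl⟩).2, ← (e (π a') ⟨a', rfl⟩).2]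
  exact congrArg σ haa'

namespace SimpleGraph

variable {V : Type*} [Fintype V] [DecidableEq V] {G : SimpleGraph V}

lemma IsBipartite.exists_card_le_isBipartiteWith_compl (hG : G.IsBipartite) :
    ∃ A : Finset V, 2 * #A ≤ Fintype.card V ∧ G.IsBipartiteWith ↑A ↑Aᶜ := by
  classical
  obtain ⟨s, t, hst⟩ := hG.exists_isBipartiteWith
  have hA : G.IsBipartiteWith ↑s.toFinset ↑s.toFinsetᶜ := by
    refine ⟨by simp [disjoint_compl_right], fun a b hab => ?_⟩
    have hts : ∀ {c}, c ∈ t → c ∉ s := fun hc hcs => Set.disjoint_left.1 hst.disjoint hcs hc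
    rcases hst.mem_of_adj hab with ⟨ha, hb⟩ | ⟨ha, hb⟩
    · simp [ha, hts hb]
    · simp [hb, hts ha]
  by_cases hle : 2 * #s.toFinset ≤ Fintype.card V
  · exact ⟨_, hle, hA⟩
  · refine ⟨s.toFinsetᶜ, ?_, by simpa using hA.symm⟩
    rw [card_compl]
    omega

variable [DecidableRel G.Adj]

theorem IsBipartite.exists_cover_by_set_and_star [Nonempty V] (hG : G.IsBipartite) {k : ℕ}
    (hV : Fintype.card V ≤ 2 * k + 3) (hE : #G.edgeFinset ≤ 2 * k + 2) :
    ∃ (S N : Finset V) (v : V), #S ≤ k ∧ #N ≤ 2 ∧ v ∉ S ∧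
      ∀ a b, G.Adj a b → a ∈ S ∨ b ∈ S ∨ (a = v ∧ b ∈ N) ∨ (a ∈ N ∧ b = v) := by
  obtain ⟨A, hA, hAB⟩ := hG.exists_card_le_isBipartiteWith_compl
  have hcover : ∀ a b, G.Adj a b → a ∈ A ∨ b ∈ A := fun a b hab => by
    rcases hAB.mem_of_adj hab with ⟨ha, -⟩ | ⟨-, hb⟩
    · exact Or.inl ha
    · exact Or.inr hb
  by_cases hAk : #A ≤ k
  · obtain ⟨v, -, hvA⟩ := exists_mem_notMem_of_card_lt_card (s := A) (t := univ)
      (by rw [card_univ]; have := Fintype.card_pos (α := V); omega)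
    refine ⟨A, ∅, v, hAk, by simp, hvA, fun a b hab => ?_⟩
    rcases hcover a b hab with h | h <;> simp [h]
  · have hsum : ∑ a ∈ A, G.degree a ≤ ∑ _a ∈ A, 2 := by
      rw [isBipartiteWith_sum_degrees_eq_card_edges hAB, sum_const, smul_eq_mul]
      omega
    obtain ⟨v, hvA, hv⟩ := exists_le_of_sum_le (card_pos.1 (by omega)) hsum
    refine ⟨A.erase v, G.neighborFinset v, v, by rw [card_erase_of_mem hvA]; omega, hv,
      notMem_erase v A, fun a b hab => ?_⟩
    rcases hcover a b hab with h | h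
    · by_cases hav : a = v
      · subst hav; simp [hab]
      · simp [h, hav]
    · by_cases hbv : b = v
      · subst hbv; simp [hab.symm]
      · simp [h, hbv]

end SimpleGraph

/-- The part of `KkJoinPathThree k` containing a vertex: `0` for the clique, `1` for the centre
`k + 1` of the path, `2` for its ends `k` and `k + 2`, `3` for the isolated vertices. -/
def kkJoinPathThreeSlot (k : ℕ) (b : Fin (3 * k + 2)) : Fin 4 :=
  if b.val < k then 0 else if b.val = k + 1 then 1 else if b.val ≤ k + 2 then 2 else 3

section KkJoinPathThree

variable {k : ℕ}

lemma card_filter_kkJoinPathThreeSlot_eq_zero : #{b | kkJoinPathThreeSlot k b = 0} = k := by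
  rw [filter_congr (q := fun b : Fin (3 * k + 2) => b.val < k) fun b _ => by
    unfold kkJoinPathThreeSlot; split_ifs <;> simp_all, Fin.card_filter_val_lt]
  omega

lemma card_filter_kkJoinPathThreeSlot_eq_one : #{b | kkJoinPathThreeSlot k b = 1} = 1 := by
  rw [card_eq_one]
  refine ⟨⟨k + 1, by omega⟩, ?_⟩
  ext b; simp [kkJoinPathThreeSlot, Fin.ext_iff]; split_ifs <;> omega

lemma card_filter_kkJoinPathThreeSlot_eq_two (hk : 1 ≤ k) :
    #{b | kkJoinPathThreeSlot k b = 2} = 2 := by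
  rw [card_eq_two]
  refine ⟨⟨k, by omega⟩, ⟨k + 2, by omega⟩, by simp [Fin.ext_iff], ?_⟩
  ext b; simp [kkJoinPathThreeSlot, Fin.ext_iff]; split_ifs <;> omega

lemma card_filter_kkJoinPathThreeSlot_eq_three :
    #{b | kkJoinPathThreeSlot k b = 3} = 2 * k - 1 := by
  rw [filter_congr (q := fun b : Fin (3 * k + 2) => ¬b.val < k + 3) fun b _ => by
    unfold kkJoinPathThreeSlot; split_ifs <;> simp_all <;> omega, filter_not, card_univ_sdiff,
    Fin.card_filter_val_lt, Fintype.card_fin]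
  omega

lemma kkJoinPathThree_adj_of_slot_eq_zero {b b' : Fin (3 * k + 2)}
    (hb : kkJoinPathThreeSlot k b = 0) (hne : b ≠ b') : (KkJoinPathThree k).Adj b b' := by
  refine ⟨hne, Or.inl ?_⟩
  unfold kkJoinPathThreeSlot at hb
  split_ifs at hb <;> simp_all

lemma kkJoinPathThree_adj_of_slot_eq_one_of_slot_eq_two {b b' : Fin (3 * k + 2)}
    (hb : kkJoinPathThreeSlot k b = 1) (hb' : kkJoinPathThreeSlot k b' = 2) :
    (KkJoinPathThree k).Adj b b' := by
  unfold kkJoinPathThreeSlot at hb hb'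
  refine ⟨fun h => by simp_all, ?_⟩
  split_ifs at hb hb' <;> simp_all; omega

variable {α : Type*} [Fintype α] [DecidableEq α] {T : SimpleGraph α}

theorem containsCopy_kkJoinPathThree_of_partition (hk : 1 ≤ k) (hα : Fintype.card α ≤ 3 * k + 2)
    {S N : Finset α} {v : α} (hS : #S = k) (hN : #N = 2) (hvS : v ∉ S) (hvN : v ∉ N)
    (hSN : Disjoint S N)
    (hcover : ∀ a b, T.Adj a b → a ∈ S ∨ b ∈ S ∨ (a = v ∧ b ∈ N) ∨ (a ∈ N ∧ b = v)) :
    ContainsCopy T (KkJoinPathThree k) := by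
  set π : α → Fin 4 := fun a => if a ∈ S then 0 else if a = v then 1 else if a ∈ N then 2 else 3
  have h0 : #{a | π a = 0} = k := by
    rw [filter_congr (q := (· ∈ S)) fun a _ => by simp only [π]; split_ifs <;> simp_all,
      filter_univ_mem, hS]
  have h1 : #{a | π a = 1} = 1 := by
    rw [filter_congr (q := (· = v)) fun a _ => by simp only [π]; split_ifs <;> grind,
      filter_eq', if_pos (mem_univ v), card_singleton]
  have h2 : #{a | π a = 2} = 2 := by
    rw [filter_congr (q := (· ∈ N)) fun a _ => by
      simp only [π]; split_ifs <;> simp_all [disjoint_left.1 hSN], filter_univ_mem, hN]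
  have hsum := card_eq_sum_card_fiberwise (f := π) (s := univ) (t := univ) fun _ _ => mem_univ _
  rw [Fin.sum_univ_four, card_univ] at hsum
  obtain ⟨f, hf, hslot⟩ := Function.exists_injective_forall_eq_of_card_fiber_le π
    (kkJoinPathThreeSlot k) fun i => by
      fin_cases i
      · simp [h0, card_filter_kkJoinPathThreeSlot_eq_zero]
      · simp [h1, card_filter_kkJoinPathThreeSlot_eq_one]
      · simp [h2, card_filter_kkJoinPathThreeSlot_eq_two hk]
      · simp only [Fin.reduceFinMk, Fin.isValue]
        rw [card_filter_kkJoinPathThreeSlot_eq_three]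
        omega
  refine ⟨f, hf, fun a b hab => ?_⟩
  rcases hcover a b hab with ha | hb | ⟨rfl, hb⟩ | ⟨ha, rfl⟩
  · exact kkJoinPathThree_adj_of_slot_eq_zero (by simp [hslot, π, ha]) (hf.ne hab.ne)
  · exact (kkJoinPathThree_adj_of_slot_eq_zero (by simp [hslot, π, hb]) (hf.ne hab.ne')).symm
  · exact kkJoinPathThree_adj_of_slot_eq_one_of_slot_eq_two (by simp [hslot, π, hvS])
      (by simp [hslot, π, hb, disjoint_right.1 hSN hb, hab.ne'])
  · exact (kkJoinPathThree_adj_of_slot_eq_one_of_slot_eq_two (by simp [hslot, π, hvS])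
      (by simp [hslot, π, ha, disjoint_right.1 hSN ha, hab.ne])).symm

theorem containsCopy_kkJoinPathThree_of_cover (hk : 1 ≤ k) (hα : k + 3 ≤ Fintype.card α)
    (hα' : Fintype.card α ≤ 3 * k + 2) {S N : Finset α} {v : α} (hS : #S ≤ k) (hN : #N ≤ 2)
    (hvS : v ∉ S)
    (hcover : ∀ a b, T.Adj a b → a ∈ S ∨ b ∈ S ∨ (a = v ∧ b ∈ N) ∨ (a ∈ N ∧ b = v)) :
    ContainsCopy T (KkJoinPathThree k) := by
  obtain ⟨S', hSS', hS'v, hS'⟩ := exists_subsuperset_card_eq (n := k)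
    (fun a ha => mem_erase.2 ⟨ne_of_mem_of_not_mem ha hvS, mem_univ a⟩) hS
    (by rw [card_erase_of_mem (mem_univ v), card_univ]; omega)
  have hvS' : v ∉ S' := fun h => by simpa using hS'v h
  obtain ⟨N', hNN', hN'S', hN'⟩ := exists_subsuperset_card_eq (n := 2)
    (sdiff_subset_sdiff (subset_univ N) subset_rfl : N \ insert v S' ⊆ univ \ insert v S')
    ((card_le_card sdiff_subset).trans hN)
    (by rw [card_univ_sdiff, card_insert_of_notMem hvS', hS']; omega)
  have hN'v : ∀ b ∈ N', b ∉ insert v S' := fun b hb => (mem_sdiff.1 (hN'S' hb)).2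
  refine containsCopy_kkJoinPathThree_of_partition hk hα' hS' hN' hvS'
    (fun h => hN'v v h (mem_insert_self v S'))
    (disjoint_right.2 fun b hb => fun h => hN'v b hb (mem_insert_of_mem h)) fun a b hab => ?_
  have hpad : ∀ {b}, T.Adj v b → b ∈ N → b ∈ S' ∨ b ∈ N' := fun {b} hvb hb => by
    by_cases hbS' : b ∈ S'
    · exact Or.inl hbS'
    · exact Or.inr (hNN' (mem_sdiff.2 ⟨hb, by simp [hbS', hvb.ne']⟩))
  rcases hcover a b hab with ha | hb | ⟨rfl, hb⟩ | ⟨ha, rfl⟩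
  · exact Or.inl (hSS' ha)
  · exact Or.inr (Or.inl (hSS' hb))
  · rcases hpad hab hb with h | h <;> simp [h]
  · rcases hpad hab.symm ha with h | h <;> simp [h]

end KkJoinPathThree

/-- `K_k ∨ ((2k-1)K_1 ∪ P_3)` contains every tree on `2k+3` vertices, k ≥ 1. -/
theorem stmt10 (k : ℕ) (hk : 1 ≤ k) (T : SimpleGraph (Fin (2 * k + 3))) (hT : T.IsTree) :
    ContainsCopy T (KkJoinPathThree k) := by
  classical
  have hE : #T.edgeFinset + 1 = 2 * k + 3 := by simpa using hT.card_edgeFinset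
  obtain ⟨S, N, v, hS, hN, hvS, hcover⟩ :=
    hT.isBipartite.exists_cover_by_set_and_star (k := k) (by simp) (by omega)
  exact containsCopy_kkJoinPathThree_of_cover hk (by rw [Fintype.card_fin]; omega)
    (by rw [Fintype.card_fin]; omega) hS hN hvS hcover
end

section
/- The graph K_k ∨ ((2k-2)K_1 ∪ 2K_2), obtained from K_{k,2k+2} by adding a matching of two edges inside the part of size 2k+2, contains every tree on 2k+3 vertices as a subgraph, for k ≥ 1. -/
/-- `K_k ∨ ((2k-2)K_1 ∪ 2K_2)` on `3k+2` vertices: the first `k` vertices form a clique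
joined to everything, and among the remaining `2k+2` vertices the only edges are the
matching `{k, k+1}` and `{k+2, k+3}`. -/
def KkJoinMatching (k : ℕ) : SimpleGraph (Fin (3 * k + 2)) where
  Adj v w := v ≠ w ∧ (v.val < k ∨ w.val < k ∨
      (v.val = k ∧ w.val = k + 1) ∨ (v.val = k + 1 ∧ w.val = k) ∨
      (v.val = k + 2 ∧ w.val = k + 3) ∨ (v.val = k + 3 ∧ w.val = k + 2))
  symm := ⟨by intro v w h; refine ⟨h.1.symm, ?_⟩; tauto⟩
  loopless := ⟨fun _ h => h.1 rfl⟩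

/-!
Two-colour the tree `T`; the smaller colour class `A` has at most `k + 1` vertices, and every
edge joins `A` to its complement. If `#A ≤ k`, put `A` in the clique `K_k`. If `#A = k + 1` and
`A` contains a leaf `v`, put `v` and its neighbour on a matching edge and `A \ {v}` in the clique.
Otherwise every vertex of `A` has degree `2` (the degrees over `A` add up to the `2k + 2` edges),
so two leaves of `T` lie outside `A`, and they cannot share their neighbour (`T` would then be a
path on three vertices); put these two leaf edges on the matching and the remaining `k` vertices
outside `A` in the clique.
-/

open Finset SimpleGraph

theorem Function.Embedding.exists_extend_of_card_le {ι α β : Type*} [Fintype ι] [Fintype α]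
    [Fintype β] (h : Fintype.card α ≤ Fintype.card β) (φ : ι ↪ α) (ψ : ι ↪ β) :
    ∃ g : α ↪ β, ∀ i, g (φ i) = ψ i := by
  classical
  obtain ⟨e⟩ := Function.Embedding.nonempty_of_card_le h
  obtain ⟨t, hψt, -, ht⟩ := exists_subsuperset_card_eq (subset_univ (univ.map ψ))
    (by simpa using Fintype.card_le_of_embedding φ) (by simpa using h)
  have hf : ∀ i, Function.extend φ ψ e (φ i) = ψ i := φ.injective.extend_apply ψ e
  obtain ⟨g, hg⟩ := Set.MapsTo.exists_equiv_extend_of_card_eq (f := Function.extend φ ψ e)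
    (s := Set.range φ) ht.symm
    (by rintro _ ⟨i, rfl⟩; simpa [hf] using hψt (mem_map_of_mem ψ (mem_univ i)))
    (by rintro _ ⟨i, rfl⟩ _ ⟨j, rfl⟩ hij; rw [hf, hf] at hij; rw [ψ.injective hij])
  exact ⟨g.toEmbedding.trans (Function.Embedding.subtype _),
    fun i => by simp [hg _ ⟨i, rfl⟩, hf]⟩

namespace SimpleGraph

variable {V : Type*} [Fintype V] {G : SimpleGraph V}

theorem IsBipartite.exists_isBipartiteWith_compl [DecidableEq V] (h : G.IsBipartite) :
    ∃ A : Finset V, 2 * #A ≤ Fintype.card V ∧ G.IsBipartiteWith ↑A ↑Aᶜ := by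
  obtain ⟨c⟩ := h
  let A₀ : Finset V := {v | c v = 0}
  have hbip₀ : G.IsBipartiteWith ↑A₀ ↑A₀ᶜ := by
    refine ⟨by rw [coe_compl]; exact disjoint_compl_right, fun v w hvw => ?_⟩
    have := c.valid hvw
    simp only [A₀, coe_compl, coe_filter, mem_univ, true_and, Set.mem_compl_iff,
      Set.mem_ofPred_eq]
    omega
  by_cases hsmall : 2 * #A₀ ≤ Fintype.card V
  · exact ⟨A₀, hsmall, hbip₀⟩
  · refine ⟨A₀ᶜ, by rw [card_compl]; omega, by simpa using hbip₀.symm⟩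

theorem Preconnected.card_le_three_of_adj_leaves [DecidableRel G.Adj] (hG : G.Preconnected)
    {a b₁ b₂ : V} (hb : b₁ ≠ b₂) (h₁ : G.Adj a b₁) (h₂ : G.Adj a b₂) (ha : G.degree a = 2)
    (hb₁ : G.degree b₁ = 1) (hb₂ : G.degree b₂ = 1) : Fintype.card V ≤ 3 := by
  classical
  have hnbr : G.neighborFinset a = {b₁, b₂} := by
    refine (eq_of_subset_of_card_le ?_ ?_).symm
    · simp [insert_subset_iff, h₁, h₂]
    · rw [card_neighborFinset_eq_degree, ha, card_pair hb]
  have hclosed : ∀ v ∈ ({a, b₁, b₂} : Finset V), ∀ w, G.Adj v w →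
      w ∈ ({a, b₁, b₂} : Finset V) := by
    intro v hv w hvw
    simp only [mem_insert, mem_singleton] at hv ⊢
    rcases hv with rfl | rfl | rfl
    · have := (mem_neighborFinset _ _ _).2 hvw
      rw [hnbr] at this
      simpa using Or.inr this
    · exact Or.inl ((degree_eq_one_iff_existsUnique_adj.1 hb₁).unique hvw h₁.symm)
    · exact Or.inl ((degree_eq_one_iff_existsUnique_adj.1 hb₂).unique hvw h₂.symm)
  have hall : ∀ v, v ∈ ({a, b₁, b₂} : Finset V) := fun v => by
    induction (reachable_iff_reflTransGen a v).1 (hG a v) with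
    | refl => simp
    | tail _ hadj ih => exact hclosed _ ih _ hadj
  calc Fintype.card V = #({a, b₁, b₂} : Finset V) := by
        rw [← card_univ, eq_univ_of_forall hall]
    _ ≤ 3 := card_le_three

theorem IsTree.exists_two_leaves_distinct_neighbors [DecidableEq V] [DecidableRel G.Adj]
    (hG : G.IsTree) (hV : 3 < Fintype.card V) {A : Finset V} (hbip : G.IsBipartiteWith ↑A ↑Aᶜ)
    (hA : Fintype.card V = 2 * #A + 1) (hleaf : ∀ a ∈ A, G.degree a ≠ 1) :
    ∃ a₁ b₁ a₂ b₂, a₁ ≠ a₂ ∧ b₁ ≠ b₂ ∧ a₁ ∈ A ∧ a₂ ∈ A ∧ b₁ ∉ A ∧ b₂ ∉ A ∧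
      G.Adj a₁ b₁ ∧ G.Adj a₂ b₂ ∧ G.degree b₁ = 1 ∧ G.degree b₂ = 1 := by
  have : Nontrivial V := Fintype.one_lt_card_iff_nontrivial.1 (by omega)
  have hdeg : ∀ a ∈ A, G.degree a = 2 := by
    have hle : ∀ a ∈ A, 2 ≤ G.degree a := fun a ha =>
      (Nat.two_le_iff _).2
        ⟨(hG.connected.preconnected.degree_pos_of_nontrivial a).ne', hleaf a ha⟩
    refine fun a ha => ((sum_eq_sum_iff_of_le hle).1 ?_ a ha).symm
    rw [isBipartiteWith_sum_degrees_eq_card_edges hbip, sum_const, smul_eq_mul]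
    have := hG.card_edgeFinset
    omega
  obtain ⟨b₁, b₂, hb, hb₁, hb₂⟩ := hG.exists_ne_and_degree_eq_one
  have hb₁A : b₁ ∉ A := fun h => hleaf b₁ h hb₁
  have hb₂A : b₂ ∉ A := fun h => hleaf b₂ h hb₂
  obtain ⟨a₁, h₁⟩ := (degree_eq_one_iff_existsUnique_adj.1 hb₁).exists
  obtain ⟨a₂, h₂⟩ := (degree_eq_one_iff_existsUnique_adj.1 hb₂).exists
  have ha₁A : a₁ ∈ A := hbip.mem_of_mem_adj' (by simpa using hb₁A) h₁.symm
  have ha₂A : a₂ ∈ A := hbip.mem_of_mem_adj' (by simpa using hb₂A) h₂.symm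
  refine ⟨a₁, b₁, a₂, b₂, ?_, hb, ha₁A, ha₂A, hb₁A, hb₂A, h₁.symm, h₂.symm, hb₁, hb₂⟩
  rintro rfl
  have := hG.connected.preconnected.card_le_three_of_adj_leaves hb h₁.symm h₂.symm
    (hdeg a₁ ha₁A) hb₁ hb₂
  omega

end SimpleGraph

section KkJoinMatching

variable {V : Type*} [Fintype V] [DecidableEq V] {T : SimpleGraph V} {k : ℕ} {A : Finset V}

-- `S` goes into the clique and `g` places `Sᶜ` on the vertices `k + i`, whose only edges are
-- `{k, k + 1}` and `{k + 2, k + 3}`.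
theorem containsCopy_kkJoinMatching_of_embedding_compl (S : Finset V) (hS : #S ≤ k)
    (g : ↥Sᶜ ↪ Fin (2 * k + 2))
    (hg : ∀ a b : ↥Sᶜ, T.Adj a b → s((g a : ℕ), g b) = s(0, 1) ∨ s((g a : ℕ), g b) = s(2, 3)) :
    ContainsCopy T (KkJoinMatching k) := by
  obtain ⟨e⟩ := Function.Embedding.nonempty_of_card_le (α := S) (β := Fin k) (by simpa using hS)
  let f : V → Fin (3 * k + 2) := fun v =>
    if h : v ∈ S then ⟨e ⟨v, h⟩, by omega⟩ else ⟨k + g ⟨v, mem_compl.2 h⟩, by omega⟩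
  have hf_inj : Function.Injective f := by
    intro a b hab
    by_cases ha : a ∈ S <;> by_cases hb : b ∈ S <;>
      simp only [f, ha, hb, dite_true, dite_false, Fin.mk.injEq] at hab
    · exact congrArg Subtype.val (e.injective (Fin.ext hab))
    · omega
    · omega
    · exact congrArg Subtype.val (g.injective (Fin.ext (Nat.add_left_cancel hab)))
  refine ⟨f, hf_inj, fun a b hab => ⟨hf_inj.ne hab.ne, ?_⟩⟩
  by_cases ha : a ∈ S
  · left; simp [f, ha]
  by_cases hb : b ∈ S
  · right; left; simp [f, hb]
  simp only [f, ha, hb, dite_false]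
  have := hg ⟨a, mem_compl.2 ha⟩ ⟨b, mem_compl.2 hb⟩ hab
  simp only [Sym2.eq_iff] at this
  omega

theorem containsCopy_kkJoinMatching_of_card_le (hbip : T.IsBipartiteWith ↑A ↑Aᶜ) (hA : #A ≤ k)
    (hAc : #Aᶜ ≤ 2 * k + 2) : ContainsCopy T (KkJoinMatching k) := by
  obtain ⟨g⟩ := Function.Embedding.nonempty_of_card_le (α := ↥Aᶜ) (β := Fin (2 * k + 2))
    (by rwa [Fintype.card_coe, Fintype.card_fin])
  refine containsCopy_kkJoinMatching_of_embedding_compl A hA g fun a b hab => ?_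
  rcases hbip.mem_of_adj hab with h | h
  · exact absurd h.1 (mem_compl.1 a.2)
  · exact absurd h.2 (mem_compl.1 b.2)

theorem containsCopy_kkJoinMatching_of_leaf [DecidableRel T.Adj]
    (hbip : T.IsBipartiteWith ↑A ↑Aᶜ) (hA : #A ≤ k + 1) (hAc : #Aᶜ ≤ 2 * k + 1) {v u : V}
    (hv : v ∈ A) (hvu : T.Adj v u) (hdeg : T.degree v = 1) :
    ContainsCopy T (KkJoinMatching k) := by
  set S := A.erase v
  have hvS : v ∈ Sᶜ := by simp [S]
  have huS : u ∈ Sᶜ := mem_compl.2 fun h =>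
    mem_compl.1 (hbip.mem_of_mem_adj hv hvu) (mem_erase.1 h).2
  let φ : Fin 2 ↪ ↥Sᶜ := ⟨![⟨v, hvS⟩, ⟨u, huS⟩], by
    intro i j; fin_cases i <;> fin_cases j <;> simp [hvu.ne, hvu.ne.symm]⟩
  obtain ⟨g, hg⟩ := φ.exists_extend_of_card_le
    (by rw [Fintype.card_coe, Fintype.card_fin, card_compl, card_erase_of_mem hv]
        rw [card_compl] at hAc; omega)
    (Fin.castLEEmb (by omega : 2 ≤ 2 * k + 2))
  refine containsCopy_kkJoinMatching_of_embedding_compl S (by rw [card_erase_of_mem hv]; omega) g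
    fun a b hab => ?_
  have hedge : ∀ x y : ↥Sᶜ, T.Adj x y → (x : V) ∈ A → x = φ 0 ∧ y = φ 1 := fun x y hxy hx => by
    have hxv : (x : V) = v := by_contra fun h => mem_compl.1 x.2 (mem_erase.2 ⟨h, hx⟩)
    exact ⟨Subtype.ext hxv,
      Subtype.ext ((degree_eq_one_iff_existsUnique_adj.1 hdeg).unique (hxv ▸ hxy) hvu)⟩
  rcases hbip.mem_of_adj hab with h | h
  · obtain ⟨rfl, rfl⟩ := hedge a b hab h.1
    left; simp [hg]
  · obtain ⟨rfl, rfl⟩ := hedge b a hab.symm h.2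
    left; simp [hg, Sym2.eq_swap]

theorem containsCopy_kkJoinMatching_of_two_leaves [DecidableRel T.Adj]
    (hbip : T.IsBipartiteWith ↑A ↑Aᶜ) (hA : #A ≤ 2 * k) (hAc : #Aᶜ ≤ k + 2)
    {a₁ b₁ a₂ b₂ : V} (ha : a₁ ≠ a₂) (hb : b₁ ≠ b₂) (ha₁ : a₁ ∈ A) (ha₂ : a₂ ∈ A) (hb₁ : b₁ ∉ A)
    (hb₂ : b₂ ∉ A) (h₁ : T.Adj a₁ b₁) (h₂ : T.Adj a₂ b₂) (hdeg₁ : T.degree b₁ = 1)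
    (hdeg₂ : T.degree b₂ = 1) :
    ContainsCopy T (KkJoinMatching k) := by
  set S := Aᶜ \ {b₁, b₂}
  have hAS : ∀ x ∈ A, x ∈ Sᶜ := fun x hx => by simp [S, hx]
  have hbS : ∀ y, y = b₁ ∨ y = b₂ → y ∈ Sᶜ := fun y hy => by simp [S, hy]
  have hS : #S + 2 = #Aᶜ := by
    rw [card_sdiff_of_subset (by simp [insert_subset_iff, hb₁, hb₂]), card_pair hb]
    have : 2 ≤ #Aᶜ := one_lt_card.2 ⟨b₁, mem_compl.2 hb₁, b₂, mem_compl.2 hb₂, hb⟩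
    omega
  have h2A : 2 ≤ #A := one_lt_card.2 ⟨a₁, ha₁, a₂, ha₂, ha⟩
  have hne : ∀ x ∈ A, ∀ y ∉ A, x ≠ y := fun x hx y hy h => hy (h ▸ hx)
  have h₁₁ := hne a₁ ha₁ b₁ hb₁; have h₁₂ := hne a₁ ha₁ b₂ hb₂
  have h₂₁ := hne a₂ ha₂ b₁ hb₁; have h₂₂ := hne a₂ ha₂ b₂ hb₂
  let φ : Fin 4 ↪ ↥Sᶜ := ⟨![⟨a₁, hAS a₁ ha₁⟩, ⟨b₁, hbS b₁ (.inl rfl)⟩, ⟨a₂, hAS a₂ ha₂⟩,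
    ⟨b₂, hbS b₂ (.inr rfl)⟩], by
      intro i j; fin_cases i <;> fin_cases j <;> simp [ha, hb, h₁₁, h₁₂, h₂₁, h₂₂, ha.symm,
        hb.symm, h₁₁.symm, h₁₂.symm, h₂₁.symm, h₂₂.symm]⟩
  obtain ⟨g, hg⟩ := φ.exists_extend_of_card_le
    (by rw [Fintype.card_coe, Fintype.card_fin, card_compl]; rw [card_compl] at hS hAc; omega)
    (Fin.castLEEmb (by omega : 4 ≤ 2 * k + 2))
  refine containsCopy_kkJoinMatching_of_embedding_compl S (by omega) g fun a b hab => ?_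
  have hedge : ∀ x y : ↥Sᶜ, T.Adj x y → (y : V) ∉ A →
      (x = φ 0 ∧ y = φ 1) ∨ (x = φ 2 ∧ y = φ 3) := fun x y hxy hy => by
    have hyb : (y : V) = b₁ ∨ (y : V) = b₂ := by
      by_contra! h
      exact mem_compl.1 y.2 (by simp [S, hy, h.1, h.2])
    rcases hyb with h | h
    · exact .inl ⟨Subtype.ext ((degree_eq_one_iff_existsUnique_adj.1 hdeg₁).unique
        (h ▸ hxy.symm) h₁.symm), Subtype.ext h⟩
    · exact .inr ⟨Subtype.ext ((degree_eq_one_iff_existsUnique_adj.1 hdeg₂).unique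
        (h ▸ hxy.symm) h₂.symm), Subtype.ext h⟩
  rcases hbip.mem_of_adj hab with h | h
  · rcases hedge a b hab (by simpa using h.2) with ⟨rfl, rfl⟩ | ⟨rfl, rfl⟩ <;> simp [hg]
  · rcases hedge b a hab.symm (by simpa using h.1) with ⟨rfl, rfl⟩ | ⟨rfl, rfl⟩ <;>
      simp [hg, Sym2.eq_swap]

end KkJoinMatching

/-- `K_k ∨ ((2k-2)K_1 ∪ 2K_2)` contains every tree on `2k+3` vertices, k ≥ 1. -/
theorem stmt11 (k : ℕ) (hk : 1 ≤ k) (T : SimpleGraph (Fin (2 * k + 3))) (hT : T.IsTree) :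
    ContainsCopy T (KkJoinMatching k) := by
  classical
  obtain ⟨A, hA, hbip⟩ := hT.isBipartite.exists_isBipartiteWith_compl
  rw [Fintype.card_fin] at hA
  have hcard : #Aᶜ + #A = 2 * k + 3 := by rw [card_compl, Fintype.card_fin]; omega
  have hApos : 0 < #A := by
    obtain ⟨w, hw⟩ := (T.degree_pos_iff_exists_adj 0).1
      (hT.connected.preconnected.degree_pos_of_nontrivial 0)
    rcases hbip.mem_of_adj hw with h | h
    · exact card_pos.2 ⟨_, h.1⟩
    · exact card_pos.2 ⟨_, h.2⟩
  by_cases hAk : #A ≤ k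
  · exact containsCopy_kkJoinMatching_of_card_le hbip hAk (by omega)
  by_cases hleaf : ∃ v ∈ A, T.degree v = 1
  · obtain ⟨v, hv, hdeg⟩ := hleaf
    obtain ⟨u, hvu⟩ := (degree_eq_one_iff_existsUnique_adj.1 hdeg).exists
    exact containsCopy_kkJoinMatching_of_leaf hbip (by omega) (by omega) hv hvu hdeg
  push Not at hleaf
  obtain ⟨a₁, b₁, a₂, b₂, ha, hb, ha₁, ha₂, hb₁, hb₂, h₁, h₂, hdeg₁, hdeg₂⟩ :=
    hT.exists_two_leaves_distinct_neighbors (by rw [Fintype.card_fin]; omega) hbip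
    (by rw [Fintype.card_fin]; omega) hleaf
  exact containsCopy_kkJoinMatching_of_two_leaves hbip (by omega) (by omega) ha hb ha₁ ha₂ hb₁
    hb₂ h₁ h₂ hdeg₁ hdeg₂
end
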